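/- Suppose for a k × m real matrix B there exist positive weights μ_j with ∑_{j=1}^m μ_j = 1 such that ‖B D_μ^{-1/2}‖ ≤ √(π/2) · ‖B‖_{∞→2}, where D_μ = diag(μ_j). Then for every δ ∈ (0,1) there exists a subset J ⊆ [m] with |J| ≥ (1-δ)m such that the restricted matrix satisfies ‖B_{[k]×J}‖ ≤ 2‖B‖_{∞→2}/√(δ m). -/

import Mathlib

noncomputable def e2 {n : ℕ} (v : Fin n → ℝ) : ℝ := Real.sqrt (∑ i, (v i)^2)

/-- The ℓ²→ℓ² operator norm of a matrix. -/
noncomputable def opNorm {k m : ℕ} (B : Matrix (Fin k) (Fin m) ℝ) : ℝ :=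
  sSup {c : ℝ | ∃ x : Fin m → ℝ, e2 x ≤ 1 ∧ c = e2 (B.mulVec x)}

/-- The ℓ∞→ℓ² operator norm of a matrix. -/
noncomputable def normInfTwo {k m : ℕ} (B : Matrix (Fin k) (Fin m) ℝ) : ℝ :=
  sSup {c : ℝ | ∃ x : Fin m → ℝ, (∀ j, |x j| ≤ 1) ∧ c = e2 (B.mulVec x)}

open Matrix Finset

/-! Restrict `B D_μ^{-1/2}` to the columns `J = {j | μ_j ≤ 1/(δ m)}` and multiply back by
`D_μ^{1/2}`: on `J` the entries of `D_μ^{1/2}` are at most `1/√(δ m)`, so the restriction of `B`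
has norm at most `‖B D_μ^{-1/2}‖/√(δ m) ≤ √(π/2) ‖B‖_{∞→2}/√(δ m)`, and `√(π/2) ≤ 2`.
Since the `μ_j` sum to `1`, Markov's inequality leaves at most `δ m` columns outside `J`. -/

lemma e2_eq_norm {n : ℕ} (v : Fin n → ℝ) : e2 v = ‖WithLp.toLp 2 v‖ := by
  simp [e2, EuclideanSpace.norm_eq, sq_abs]

noncomputable def euclideanCLM {k m : ℕ} (A : Matrix (Fin k) (Fin m) ℝ) :
    EuclideanSpace ℝ (Fin m) →L[ℝ] EuclideanSpace ℝ (Fin k) :=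
  LinearMap.toContinuousLinearMap (Matrix.toEuclideanLin A)

lemma euclideanCLM_toLp {k m : ℕ} (A : Matrix (Fin k) (Fin m) ℝ) (x : Fin m → ℝ) :
    euclideanCLM A (WithLp.toLp 2 x) = WithLp.toLp 2 (A *ᵥ x) :=
  rfl

lemma opNorm_eq_norm {k m : ℕ} (A : Matrix (Fin k) (Fin m) ℝ) :
    opNorm A = ‖euclideanCLM A‖ := by
  rw [← ContinuousLinearMap.sSup_unitClosedBall_eq_norm]
  refine congrArg sSup (Set.ext fun c => ?_)
  simp only [Set.mem_ofPred_eq, Set.mem_image, Metric.mem_closedBall, dist_zero_right]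
  constructor
  · rintro ⟨x, hx, rfl⟩
    exact ⟨WithLp.toLp 2 x, by rwa [← e2_eq_norm], by rw [euclideanCLM_toLp A, e2_eq_norm]⟩
  · rintro ⟨x, hx, rfl⟩
    exact ⟨x.ofLp, by rwa [e2_eq_norm], by rw [e2_eq_norm, ← euclideanCLM_toLp A]⟩

lemma e2_mulVec_le {k m : ℕ} (A : Matrix (Fin k) (Fin m) ℝ) (x : Fin m → ℝ) :
    e2 (A *ᵥ x) ≤ opNorm A * e2 x := by
  simpa only [opNorm_eq_norm, e2_eq_norm, euclideanCLM_toLp A] using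
    (euclideanCLM A).le_opNorm (WithLp.toLp 2 x)

lemma opNorm_le_of_e2_mulVec_le {k m : ℕ} {A : Matrix (Fin k) (Fin m) ℝ} {M : ℝ} (hM : 0 ≤ M)
    (h : ∀ x, e2 (A *ᵥ x) ≤ M * e2 x) : opNorm A ≤ M := by
  rw [opNorm_eq_norm]
  refine (euclideanCLM A).opNorm_le_bound hM fun x => ?_
  simpa only [e2_eq_norm, euclideanCLM_toLp A] using h x.ofLp

lemma opNorm_nonneg {k m : ℕ} (A : Matrix (Fin k) (Fin m) ℝ) : 0 ≤ opNorm A := by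
  rw [opNorm_eq_norm]; exact norm_nonneg _

lemma e2_mul_le {n : ℕ} {w : Fin n → ℝ} {c : ℝ} (hc : 0 ≤ c) (hw : ∀ j, |w j| ≤ c)
    (x : Fin n → ℝ) : e2 (w * x) ≤ c * e2 x := by
  have hterm (j : Fin n) : (w j * x j) ^ 2 ≤ c ^ 2 * x j ^ 2 := by
    rw [mul_pow, ← sq_abs (w j)]
    gcongr
    exact hw j
  calc e2 (w * x) ≤ Real.sqrt (c ^ 2 * ∑ j, x j ^ 2) := by
        rw [mul_sum]
        exact Real.sqrt_le_sqrt (sum_le_sum fun j _ => hterm j)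
    _ = c * e2 x := by rw [Real.sqrt_mul (sq_nonneg c), Real.sqrt_sq hc, e2]

lemma opNorm_mul_diagonal_le {k m : ℕ} (A : Matrix (Fin k) (Fin m) ℝ) {w : Fin m → ℝ} {c : ℝ}
    (hc : 0 ≤ c) (hw : ∀ j, |w j| ≤ c) : opNorm (A * diagonal w) ≤ c * opNorm A := by
  refine opNorm_le_of_e2_mulVec_le (mul_nonneg hc (opNorm_nonneg A)) fun x => ?_
  have hdiag : diagonal w *ᵥ x = w * x := funext (mulVec_diagonal w x)
  calc e2 ((A * diagonal w) *ᵥ x) ≤ opNorm A * e2 (w * x) := by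
        rw [← mulVec_mulVec, hdiag]
        exact e2_mulVec_le A _
    _ ≤ opNorm A * (c * e2 x) := by gcongr; exacts [opNorm_nonneg A, e2_mul_le hc hw x]
    _ = c * opNorm A * e2 x := by ring

lemma mul_card_filter_le_sum {ι : Type*} (s : Finset ι) {f : ι → ℝ} (hf : ∀ i ∈ s, 0 ≤ f i)
    (t : ℝ) : t * #{i ∈ s | t < f i} ≤ ∑ i ∈ s, f i := by
  calc t * #{i ∈ s | t < f i} ≤ ∑ i ∈ s with t < f i, f i := by
        simpa [nsmul_eq_mul, mul_comm] using
          card_nsmul_le_sum _ f t fun i hi => (mem_filter.1 hi).2.le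
    _ ≤ ∑ i ∈ s, f i :=
        sum_le_sum_of_subset_of_nonneg (filter_subset _ _) fun i hi _ => hf i hi

lemma sub_le_card_filter_le_inv {ι : Type*} [Fintype ι] {μ : ι → ℝ} (hμ : ∀ i, 0 ≤ μ i)
    (hμsum : ∑ i, μ i ≤ 1) {t : ℝ} (ht : 0 < t) :
    (Fintype.card ι : ℝ) - t ≤ #{i | μ i ≤ t⁻¹} := by
  have hmarkov := mul_card_filter_le_sum univ (fun i _ => hμ i) t⁻¹
  rw [inv_mul_le_iff₀ ht] at hmarkov
  have hlarge : (#{i | t⁻¹ < μ i} : ℝ) ≤ t := hmarkov.trans (mul_le_of_le_one_right ht.le hμsum)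
  have hsplit := card_filter_add_card_filter_not (s := univ) (fun i => μ i ≤ t⁻¹)
  simp only [not_le, card_univ] at hsplit
  have hsplit' : (#{i | μ i ≤ t⁻¹} : ℝ) + #{i | t⁻¹ < μ i} = Fintype.card ι := by
    exact_mod_cast hsplit
  linarith

lemma of_ite_mem_eq_mul_diagonal_mul_diagonal {k m : ℕ} (B : Matrix (Fin k) (Fin m) ℝ)
    (J : Finset (Fin m)) {d : Fin m → ℝ} (hd : ∀ j ∈ J, d j ≠ 0) :
    (of fun i j => if j ∈ J then B i j else 0) =
      B * diagonal (fun j => (d j)⁻¹) * diagonal (fun j => if j ∈ J then d j else 0) := by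
  ext i j
  by_cases hj : j ∈ J
  · simp [hj, hd j hj]
  · simp [hj]

lemma normInfTwo_nonneg {k m : ℕ} (B : Matrix (Fin k) (Fin m) ℝ) : 0 ≤ normInfTwo B :=
  Real.sSup_nonneg (by rintro c ⟨x, _, rfl⟩; exact Real.sqrt_nonneg _)

lemma sqrt_pi_div_two_le_two : Real.sqrt (Real.pi / 2) ≤ 2 :=
  Real.sqrt_le_iff.2 ⟨zero_le_two, by linarith [Real.pi_le_four]⟩

theorem stmt4_general (k m : ℕ) (B : Matrix (Fin k) (Fin m) ℝ) (μ : Fin m → ℝ)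
    (hμpos : ∀ j, 0 < μ j) (hμsum : ∑ j, μ j = 1)
    (hfact : opNorm (B * Matrix.diagonal (fun j => (Real.sqrt (μ j))⁻¹)) ≤
      Real.sqrt (Real.pi / 2) * normInfTwo B)
    (δ : ℝ) (hδ : 0 < δ) :
    ∃ J : Finset (Fin m), (1 - δ) * m ≤ J.card ∧
      opNorm (Matrix.of fun i j => if j ∈ J then B i j else 0) ≤
        2 * normInfTwo B / Real.sqrt (δ * m) := by
  have hm : 0 < m := Nat.pos_of_ne_zero (by rintro rfl; simp at hμsum)
  have hδm : 0 < δ * m := by positivity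
  set J : Finset (Fin m) := {j | μ j ≤ (δ * m)⁻¹}
  refine ⟨J, ?_, ?_⟩
  · have hcard := sub_le_card_filter_le_inv (fun j => (hμpos j).le) hμsum.le hδm
    rw [Fintype.card_fin] at hcard
    linarith
  · have hw (j : Fin m) : |if j ∈ J then Real.sqrt (μ j) else 0| ≤ (Real.sqrt (δ * m))⁻¹ := by
      split_ifs with hj
      · rw [abs_of_nonneg (Real.sqrt_nonneg _), ← Real.sqrt_inv]
        exact Real.sqrt_le_sqrt (mem_filter.1 hj).2
      · rw [abs_zero]; positivity
    rw [of_ite_mem_eq_mul_diagonal_mul_diagonal B J fun j _ => (Real.sqrt_pos.2 (hμpos j)).ne']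
    calc _ ≤ (Real.sqrt (δ * m))⁻¹ * opNorm (B * diagonal fun j => (Real.sqrt (μ j))⁻¹) :=
          opNorm_mul_diagonal_le _ (by positivity) hw
      _ ≤ (Real.sqrt (δ * m))⁻¹ * (2 * normInfTwo B) := by
          gcongr
          exact hfact.trans <|
            mul_le_mul_of_nonneg_right sqrt_pi_div_two_le_two (normInfTwo_nonneg B)
      _ = 2 * normInfTwo B / Real.sqrt (δ * m) := by ring

theorem stmt4 (k m : ℕ) (B : Matrix (Fin k) (Fin m) ℝ) (μ : Fin m → ℝ)
    (hμpos : ∀ j, 0 < μ j) (hμsum : ∑ j, μ j = 1)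
    (hfact : opNorm (B * Matrix.diagonal (fun j => (Real.sqrt (μ j))⁻¹)) ≤
      Real.sqrt (Real.pi / 2) * normInfTwo B)
    (δ : ℝ) (hδ : 0 < δ) (hδ1 : δ < 1) :
    ∃ J : Finset (Fin m), (1 - δ) * m ≤ J.card ∧
      opNorm (Matrix.of fun i j => if j ∈ J then B i j else 0) ≤
        2 * normInfTwo B / Real.sqrt (δ * m) :=
  stmt4_general k m B μ hμpos hμsum hfact δ hδ
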